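/- arXiv:2507.05188 — 2 statements merged into one kernel-verified Lean document; each statement's English description precedes it below -/
import Mathlib

section
/- Let K be a field and let A be a proper subfield of K. Then the subring A + XK[X] = {f ∈ K[X] : f(0) ∈ A} of the polynomial ring K[X] is a half-factorial domain that is not a unique factorization domain. -/
/-- An integral domain is *atomic* if every nonzero nonunit can be written as a finite
product of irreducible elements. -/
def IsAtomicDomain (D : Type*) [CommRing D] [IsDomain D] : Prop :=
  ∀ x : D, x ≠ 0 → ¬IsUnit x → ∃ s : Multiset D, (∀ a ∈ s, Irreducible a) ∧ s.prod = x

/-- `D` is a *half-factorial domain* if it is atomic and whenever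
`x₁ ⋯ xₙ = y₁ ⋯ yₘ` with all `xᵢ` and `yⱼ` irreducible, then `n = m`. -/
def IsHalfFactorialDomain (D : Type*) [CommRing D] [IsDomain D] : Prop :=
  IsAtomicDomain D ∧
    ∀ s t : Multiset D, (∀ a ∈ s, Irreducible a) → (∀ a ∈ t, Irreducible a) →
      s.prod = t.prod → Multiset.card s = Multiset.card t

/-- The subring `A + XK[X] = {f ∈ K[X] : f(0) ∈ A}` of `K[X]`. -/
noncomputable def APlusXKX {K : Type*} [Field K] (A : Subfield K) : Subring (Polynomial K) :=
  Subring.comap Polynomial.constantCoeff A.toSubring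

open Polynomial

section Aux

variable {K : Type*} [Field K] {A : Subfield K}

lemma APlusXKX.mem_iff {f : K[X]} : f ∈ APlusXKX A ↔ f.coeff 0 ∈ A := by
  simp [APlusXKX, Subring.mem_comap, Polynomial.constantCoeff_apply]

lemma APlusXKX.isUnit_iff_coe (f : APlusXKX A) : IsUnit f ↔ IsUnit (f : K[X]) := by
  constructor
  · intro h; exact h.map (APlusXKX A).subtype
  · intro h
    obtain ⟨r, hr, hCr⟩ := Polynomial.isUnit_iff.mp h
    have hr0 : r ≠ 0 := hr.ne_zero
    have hrA : r ∈ A := by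
      have h2 := f.2
      rw [APlusXKX.mem_iff] at h2
      rwa [← hCr, coeff_C_zero] at h2
    refine IsUnit.of_mul_eq_one (a := f) ⟨C r⁻¹, by
      rw [APlusXKX.mem_iff, coeff_C_zero]; exact A.inv_mem hrA⟩ ?_
    apply Subtype.ext
    show (f : K[X]) * C r⁻¹ = 1
    rw [← hCr, ← C_mul, mul_inv_cancel₀ hr0, C_1]

lemma APlusXKX.irreducible_of_irreducible_coe {f : APlusXKX A}
    (hf : Irreducible (f : K[X])) : Irreducible f := by
  constructor
  · rw [APlusXKX.isUnit_iff_coe]; exact hf.not_isUnit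
  · intro g h hgh
    have hc : (f : K[X]) = (g : K[X]) * (h : K[X]) := by
      rw [hgh]; rfl
    rcases hf.isUnit_or_isUnit hc with h1 | h1
    · left; rwa [APlusXKX.isUnit_iff_coe]
    · right; rwa [APlusXKX.isUnit_iff_coe]

/-- Key scaling lemma: any factorization of `f ∈ R` in `K[X]` can be adjusted by units
to a factorization inside `R`. -/
lemma APlusXKX.exists_factor {f : APlusXKX A} {g h : K[X]}
    (hf : (f : K[X]) = g * h) :
    ∃ g' h' : APlusXKX A, f = g' * h' ∧ Associated g (g' : K[X]) ∧
      Associated h (h' : K[X]) := by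
  have hfA : (f : K[X]).coeff 0 ∈ A := APlusXKX.mem_iff.mp f.2
  have hmul : (f : K[X]).coeff 0 = g.coeff 0 * h.coeff 0 := by
    rw [hf, mul_coeff_zero]
  by_cases hg0 : g.coeff 0 = 0
  · by_cases hh0 : h.coeff 0 = 0
    · refine ⟨⟨g, by rw [APlusXKX.mem_iff, hg0]; exact A.zero_mem⟩,
        ⟨h, by rw [APlusXKX.mem_iff, hh0]; exact A.zero_mem⟩,
        Subtype.ext hf, Associated.refl _, Associated.refl _⟩
    · -- scale by h.coeff 0
      set c := h.coeff 0 with hc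
      have hu : IsUnit (C c : K[X]) := Polynomial.isUnit_C.mpr (isUnit_iff_ne_zero.mpr hh0)
      have hu' : IsUnit (C c⁻¹ : K[X]) :=
        Polynomial.isUnit_C.mpr (isUnit_iff_ne_zero.mpr (inv_ne_zero hh0))
      refine ⟨⟨g * C c, by
          rw [APlusXKX.mem_iff, mul_coeff_zero, hg0, zero_mul]; exact A.zero_mem⟩,
        ⟨h * C c⁻¹, by
          rw [APlusXKX.mem_iff, mul_coeff_zero, coeff_C_zero, mul_inv_cancel₀ hh0]
          exact A.one_mem⟩, ?_, ⟨hu.unit, by rw [IsUnit.unit_spec]⟩,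
        ⟨hu'.unit, by rw [IsUnit.unit_spec]⟩⟩
      apply Subtype.ext
      show (f : K[X]) = g * C c * (h * C c⁻¹)
      have hcc : (C c : K[X]) * C c⁻¹ = 1 := by
        rw [← C_mul, mul_inv_cancel₀ hh0, C_1]
      calc (f : K[X]) = g * h := hf
        _ = g * h * (C c * C c⁻¹) := by rw [hcc, mul_one]
        _ = g * C c * (h * C c⁻¹) := by ring
  · -- scale by g.coeff 0
    set c := g.coeff 0 with hc
    have hu : IsUnit (C c : K[X]) := Polynomial.isUnit_C.mpr (isUnit_iff_ne_zero.mpr hg0)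
    have hu' : IsUnit (C c⁻¹ : K[X]) :=
      Polynomial.isUnit_C.mpr (isUnit_iff_ne_zero.mpr (inv_ne_zero hg0))
    refine ⟨⟨g * C c⁻¹, by
        rw [APlusXKX.mem_iff, mul_coeff_zero, coeff_C_zero, mul_inv_cancel₀ hg0]
        exact A.one_mem⟩,
      ⟨h * C c, by
        rw [APlusXKX.mem_iff, mul_coeff_zero, coeff_C_zero]
        rw [mul_comm]
        rwa [← hmul]⟩, ?_, ⟨hu'.unit, by rw [IsUnit.unit_spec]⟩,
      ⟨hu.unit, by rw [IsUnit.unit_spec]⟩⟩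
    apply Subtype.ext
    show (f : K[X]) = g * C c⁻¹ * (h * C c)
    have hcc : (C c⁻¹ : K[X]) * C c = 1 := by
      rw [← C_mul, inv_mul_cancel₀ hg0, C_1]
    calc (f : K[X]) = g * h := hf
      _ = g * h * (C c⁻¹ * C c) := by rw [hcc, mul_one]
      _ = g * C c⁻¹ * (h * C c) := by ring

lemma APlusXKX.irreducible_coe {f : APlusXKX A} (hf : Irreducible f) :
    Irreducible (f : K[X]) := by
  constructor
  · rw [← APlusXKX.isUnit_iff_coe]; exact hf.not_isUnit
  · intro g h hgh
    obtain ⟨g', h', hfe, hag, hah⟩ := APlusXKX.exists_factor (f := f) hgh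
    rcases hf.isUnit_or_isUnit hfe with h1 | h1
    · left
      rw [APlusXKX.isUnit_iff_coe] at h1
      exact (hag.symm.isUnit h1)
    · right
      rw [APlusXKX.isUnit_iff_coe] at h1
      exact (hah.symm.isUnit h1)

lemma APlusXKX.coe_ne_zero {f : APlusXKX A} (hf : f ≠ 0) : (f : K[X]) ≠ 0 := by
  intro h
  exact hf (Subtype.ext h)

lemma APlusXKX.atomic : IsAtomicDomain (APlusXKX A) := by
  have key : ∀ n : ℕ, ∀ f : APlusXKX A, (f : K[X]).natDegree ≤ n → f ≠ 0 → ¬IsUnit f →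
      ∃ s : Multiset (APlusXKX A), (∀ a ∈ s, Irreducible a) ∧ s.prod = f := by
    intro n
    induction n with
    | zero =>
      intro f hdeg hf0 hfu
      exfalso
      apply hfu
      rw [APlusXKX.isUnit_iff_coe]
      have : (f : K[X]) = C ((f : K[X]).coeff 0) :=
        Polynomial.eq_C_of_natDegree_eq_zero (Nat.le_zero.mp hdeg)
      rw [this, Polynomial.isUnit_C, isUnit_iff_ne_zero]
      intro h0
      apply APlusXKX.coe_ne_zero hf0
      rw [this, h0, C_0]
    | succ n ih =>
      intro f hdeg hf0 hfu
      have hfc0 : (f : K[X]) ≠ 0 := APlusXKX.coe_ne_zero hf0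
      have hfcu : ¬IsUnit (f : K[X]) := by
        rw [← APlusXKX.isUnit_iff_coe]; exact hfu
      obtain ⟨p, hp, hpd⟩ := WfDvdMonoid.exists_irreducible_factor hfcu hfc0
      obtain ⟨g, hpg⟩ := hpd
      obtain ⟨p', g', hfe, hap, hag⟩ := APlusXKX.exists_factor (f := f) hpg
      have hp'c : Irreducible (p' : K[X]) := hap.irreducible hp
      have hp' : Irreducible p' := APlusXKX.irreducible_of_irreducible_coe hp'c
      by_cases hgu : IsUnit g'
      · refine ⟨{f}, ?_, by simp⟩
        intro a ha
        rw [Multiset.mem_singleton] at ha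
        rw [ha]
        have : Associated p' f := ⟨hgu.unit, by rw [IsUnit.unit_spec]; exact hfe.symm⟩
        exact this.irreducible hp'
      · have hg0 : g' ≠ 0 := by
          rintro rfl
          rw [mul_zero] at hfe
          exact hf0 hfe
        have hp'0 : (p' : K[X]) ≠ 0 := hp'c.ne_zero
        have hg'0 : (g' : K[X]) ≠ 0 := APlusXKX.coe_ne_zero hg0
        have hdegmul : (f : K[X]).natDegree =
            (p' : K[X]).natDegree + (g' : K[X]).natDegree := by
          have : (f : K[X]) = (p' : K[X]) * (g' : K[X]) := by rw [hfe]; rfl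
          rw [this, Polynomial.natDegree_mul hp'0 hg'0]
        have hp'pos : 1 ≤ (p' : K[X]).natDegree := by
          by_contra hlt
          push_neg at hlt
          apply hp'c.not_isUnit
          have h0 : (p' : K[X]).natDegree = 0 := by omega
          have : (p' : K[X]) = C ((p' : K[X]).coeff 0) :=
            Polynomial.eq_C_of_natDegree_eq_zero h0
          rw [this, Polynomial.isUnit_C, isUnit_iff_ne_zero]
          intro hz
          apply hp'0
          rw [this, hz, C_0]
        have hdeg' : (g' : K[X]).natDegree ≤ n := by omega
        obtain ⟨s, hs, hsp⟩ := ih g' hdeg' hg0 hgu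
        refine ⟨p' ::ₘ s, ?_, by rw [Multiset.prod_cons, hsp]; exact hfe.symm⟩
        intro a ha
        rw [Multiset.mem_cons] at ha
        rcases ha with rfl | ha
        · exact hp'
        · exact hs a ha
  intro f hf0 hfu
  exact key _ f le_rfl hf0 hfu

end Aux

/-- For a proper subfield `A` of a field `K`, the ring `A + XK[X]` is a half-factorial
domain that is not a unique factorization domain. -/
theorem APlusXKX_halfFactorial_not_UFD {K : Type*} [Field K] (A : Subfield K)
    (hA : A ≠ ⊤) :
    IsHalfFactorialDomain (APlusXKX A) ∧ ¬UniqueFactorizationMonoid (APlusXKX A) := by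
  constructor
  · refine ⟨APlusXKX.atomic, ?_⟩
    intro s t hs ht hst
    have hrel : Multiset.Rel Associated (s.map ((APlusXKX A).subtype))
        (t.map ((APlusXKX A).subtype)) := by
      apply UniqueFactorizationMonoid.factors_unique
      · intro x hx
        obtain ⟨a, ha, rfl⟩ := Multiset.mem_map.mp hx
        exact APlusXKX.irreducible_coe (hs a ha)
      · intro x hx
        obtain ⟨a, ha, rfl⟩ := Multiset.mem_map.mp hx
        exact APlusXKX.irreducible_coe (ht a ha)
      · rw [Multiset.prod_hom s ((APlusXKX A).subtype),
          Multiset.prod_hom t ((APlusXKX A).subtype), hst]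
        exact Associated.refl _
    have := Multiset.card_eq_card_of_rel hrel
    simpa using this
  · intro hUFM
    obtain ⟨a, haA⟩ : ∃ a : K, a ∉ A := by
      by_contra hcon
      push_neg at hcon
      exact hA (Subfield.ext fun x => ⟨fun _ => trivial, fun _ => hcon x⟩)
    have ha0 : a ≠ 0 := fun h => haA (h ▸ A.zero_mem)
    have haiA : a⁻¹ ∉ A := fun h => haA (by simpa using A.inv_mem h)
    set xR : APlusXKX A := ⟨X, by rw [APlusXKX.mem_iff, coeff_X_zero]; exact A.zero_mem⟩
      with hxR
    have hXirr : Irreducible xR :=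
      APlusXKX.irreducible_of_irreducible_coe (by exact Polynomial.irreducible_X)
    have hXprime : Prime xR := UniqueFactorizationMonoid.irreducible_iff_prime.mp hXirr
    set u : APlusXKX A := ⟨C a * X, by
      rw [APlusXKX.mem_iff, mul_coeff_zero, coeff_X_zero, mul_zero]; exact A.zero_mem⟩
    set v : APlusXKX A := ⟨C a⁻¹ * X, by
      rw [APlusXKX.mem_iff, mul_coeff_zero, coeff_X_zero, mul_zero]; exact A.zero_mem⟩
    have hdvd : xR ∣ u * v := by
      refine ⟨xR, Subtype.ext ?_⟩
      show (C a * X) * (C a⁻¹ * X) = X * X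
      rw [mul_mul_mul_comm, ← C_mul, mul_inv_cancel₀ ha0, C_1, one_mul]
    rcases hXprime.2.2 u v hdvd with ⟨g, hg⟩ | ⟨g, hg⟩
    · have hcg : C a * X = X * (g : K[X]) := congrArg Subtype.val hg
      have : (g : K[X]) = C a := by
        apply mul_left_cancel₀ (Polynomial.X_ne_zero (R := K))
        rw [← hcg, mul_comm]
      apply haA
      have h2 := APlusXKX.mem_iff.mp g.2
      rwa [this, coeff_C_zero] at h2
    · have hcg : C a⁻¹ * X = X * (g : K[X]) := congrArg Subtype.val hg
      have : (g : K[X]) = C a⁻¹ := by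
        apply mul_left_cancel₀ (Polynomial.X_ne_zero (R := K))
        rw [← hcg, mul_comm]
      apply haiA
      have h2 := APlusXKX.mem_iff.mp g.2
      rwa [this, coeff_C_zero] at h2
end

section
/- The additive submonoid M = {(x₁, x₂, x₃) ∈ ℕ₀³ : x₁ + 2x₂ = 3x₃} of ℕ₀³ (a Diophantine monoid realizing the block monoid over ℤ/3ℤ) is length-factorial but not factorial. -/
/-- An element of an additive commutative monoid is an *atom* (irreducible) if it is
nonzero and cannot be written as a sum of two nonzero elements. -/
def IsAddAtom {N : Type*} [AddCommMonoid N] (x : N) : Prop :=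
  x ≠ 0 ∧ ∀ a b : N, x = a + b → a = 0 ∨ b = 0

/-- An additive reduced monoid is *atomic* if every nonzero element is a finite sum
of atoms. -/
def IsAddAtomic (N : Type*) [AddCommMonoid N] : Prop :=
  ∀ x : N, x ≠ 0 → ∃ s : Multiset N, (∀ a ∈ s, IsAddAtom a) ∧ s.sum = x

/-- Length-factorial: any two representations of an element as a sum of the same
number of atoms agree up to permutation (i.e., as multisets). -/
def IsAddLengthFactorial (N : Type*) [AddCommMonoid N] : Prop :=
  ∀ s t : Multiset N, (∀ a ∈ s, IsAddAtom a) → (∀ a ∈ t, IsAddAtom a) →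
    s.sum = t.sum → Multiset.card s = Multiset.card t → s = t

/-- Factorial: atomic, and any two representations of an element as a sum of atoms
agree up to permutation (i.e., as multisets). -/
def IsAddFactorial (N : Type*) [AddCommMonoid N] : Prop :=
  IsAddAtomic N ∧
    ∀ s t : Multiset N, (∀ a ∈ s, IsAddAtom a) → (∀ a ∈ t, IsAddAtom a) →
      s.sum = t.sum → s = t

/-- The Diophantine monoid `M = {x ∈ ℕ₀³ : x₁ + 2x₂ = 3x₃}`, realizing the block
monoid over `ℤ/3ℤ`. -/
def M : AddSubmonoid (Fin 3 → ℕ) where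
  carrier := {x | x 0 + 2 * x 1 = 3 * x 2}
  zero_mem' := rfl
  add_mem' := by
    intro a b ha hb
    simp only [Set.mem_setOf_eq, Pi.add_apply] at *
    omega

lemma mem_M {x : Fin 3 → ℕ} : x ∈ M ↔ x 0 + 2 * x 1 = 3 * x 2 := Iff.rfl

def A : M := ⟨![3,0,1], by rw [mem_M]; simp⟩
def B : M := ⟨![0,3,2], by rw [mem_M]; simp⟩
def C : M := ⟨![1,1,1], by rw [mem_M]; simp⟩

lemma forall_fin3 {p : Fin 3 → Prop} (h0 : p 0) (h1 : p 1) (h2 : p 2) : ∀ i, p i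
  | 0 => h0
  | 1 => h1
  | 2 => h2

lemma eqM {x y : M} (h0 : (x : Fin 3 → ℕ) 0 = (y : Fin 3 → ℕ) 0)
    (h1 : (x : Fin 3 → ℕ) 1 = (y : Fin 3 → ℕ) 1)
    (h2 : (x : Fin 3 → ℕ) 2 = (y : Fin 3 → ℕ) 2) : x = y :=
  Subtype.ext (funext (forall_fin3 h0 h1 h2))

lemma atom_ABC {u : M} (hu : u = A ∨ u = B ∨ u = C) : IsAddAtom u := by
  constructor
  · rcases hu with rfl | rfl | rfl <;> decide
  · rintro ⟨a, ha⟩ ⟨b, hb⟩ h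
    rw [Subtype.ext_iff] at h
    have h0 := congrFun h 0
    have h1 := congrFun h 1
    have h2 := congrFun h 2
    rw [mem_M] at ha hb
    simp only [AddSubmonoid.coe_add, Pi.add_apply] at h0 h1 h2
    have hd : (a 0 = 0 ∧ a 1 = 0 ∧ a 2 = 0) ∨ (b 0 = 0 ∧ b 1 = 0 ∧ b 2 = 0) := by
      rcases show a 1 = 0 ∨ a 1 = 1 ∨ a 1 = 2 ∨ a 1 = 3 ∨ 4 ≤ a 1 by omega
        with h' | h' | h' | h' | h' <;>
      rcases hu with rfl | rfl | rfl <;>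
        simp only [A, B, C, Matrix.cons_val_zero, Matrix.cons_val_one, Matrix.head_cons,
          Matrix.cons_val_two, Matrix.tail_cons] at h0 h1 h2 <;> omega
    rcases hd with h | h
    · exact Or.inl (eqM h.1 h.2.1 h.2.2)
    · exact Or.inr (eqM h.1 h.2.1 h.2.2)

lemma split_atom {x u : M} (hx : IsAddAtom x) (hu : u ≠ 0)
    (h0 : (u : Fin 3 → ℕ) 0 ≤ (x : Fin 3 → ℕ) 0)
    (h1 : (u : Fin 3 → ℕ) 1 ≤ (x : Fin 3 → ℕ) 1)
    (h2 : (u : Fin 3 → ℕ) 2 ≤ (x : Fin 3 → ℕ) 2) : x = u := by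
  have hx2 := x.2
  have hu2 := u.2
  rw [mem_M] at hx2 hu2
  have hle : ∀ i, (u : Fin 3 → ℕ) i ≤ (x : Fin 3 → ℕ) i := forall_fin3 h0 h1 h2
  have hm : ((x : Fin 3 → ℕ) - (u : Fin 3 → ℕ)) ∈ M := by
    rw [mem_M]; simp only [Pi.sub_apply]; omega
  have heq : x = u + ⟨(x : Fin 3 → ℕ) - (u : Fin 3 → ℕ), hm⟩ := by
    apply Subtype.ext
    simp only [AddSubmonoid.coe_add]
    funext i
    have := hle i
    simp only [Pi.add_apply, Pi.sub_apply]
    omega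
  rcases hx.2 _ _ heq with h | h
  · exact absurd h hu
  · have h' : (x : Fin 3 → ℕ) - (u : Fin 3 → ℕ) = 0 := congrArg Subtype.val h
    have g0 := congrFun h' 0
    have g1 := congrFun h' 1
    have g2 := congrFun h' 2
    simp only [Pi.sub_apply, Pi.zero_apply] at g0 g1 g2
    exact eqM (by omega) (by omega) (by omega)

lemma atom_eq {x : M} (hx : IsAddAtom x) : x = A ∨ x = B ∨ x = C := by
  have hx2 := x.2
  rw [mem_M] at hx2
  have hne : ¬ ((x : Fin 3 → ℕ) 0 = 0 ∧ (x : Fin 3 → ℕ) 1 = 0 ∧ (x : Fin 3 → ℕ) 2 = 0) :=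
    fun h => hx.1 (eqM h.1 h.2.1 h.2.2)
  have hA : (A : Fin 3 → ℕ) 0 = 3 ∧ (A : Fin 3 → ℕ) 1 = 0 ∧ (A : Fin 3 → ℕ) 2 = 1 :=
    ⟨rfl, rfl, rfl⟩
  have hB : (B : Fin 3 → ℕ) 0 = 0 ∧ (B : Fin 3 → ℕ) 1 = 3 ∧ (B : Fin 3 → ℕ) 2 = 2 :=
    ⟨rfl, rfl, rfl⟩
  have hC : (C : Fin 3 → ℕ) 0 = 1 ∧ (C : Fin 3 → ℕ) 1 = 1 ∧ (C : Fin 3 → ℕ) 2 = 1 :=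
    ⟨rfl, rfl, rfl⟩
  by_cases hc : 1 ≤ (x : Fin 3 → ℕ) 0 ∧ 1 ≤ (x : Fin 3 → ℕ) 1
  · exact Or.inr (Or.inr (split_atom hx (by decide) (by omega) (by omega) (by omega)))
  · by_cases ha : 3 ≤ (x : Fin 3 → ℕ) 0
    · exact Or.inl (split_atom hx (by decide) (by omega) (by omega) (by omega))
    · by_cases hb : 3 ≤ (x : Fin 3 → ℕ) 1
      · exact Or.inr (Or.inl (split_atom hx (by decide) (by omega) (by omega) (by omega)))
      · exact absurd (by omega) hne

lemma sum_counts (s : Multiset M) (hs : ∀ a ∈ s, a = A ∨ a = B ∨ a = C) :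
    ((s.sum : M) : Fin 3 → ℕ) 0 = 3 * s.count A + s.count C ∧
    ((s.sum : M) : Fin 3 → ℕ) 1 = 3 * s.count B + s.count C ∧
    ((s.sum : M) : Fin 3 → ℕ) 2 = s.count A + 2 * s.count B + s.count C ∧
    Multiset.card s = s.count A + s.count B + s.count C := by
  induction s using Multiset.induction with
  | empty => simp [show ((0 : M) : Fin 3 → ℕ) = 0 from rfl]
  | cons a s ih =>
    have ha := hs a (Multiset.mem_cons_self a s)
    obtain ⟨i0, i1, i2, ic⟩ := ih (fun b hb => hs b (Multiset.mem_cons_of_mem hb))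
    have e0 : ((((a ::ₘ s).sum : M)) : Fin 3 → ℕ) 0
        = (a : Fin 3 → ℕ) 0 + ((s.sum : M) : Fin 3 → ℕ) 0 := by
      rw [Multiset.sum_cons]; rfl
    have e1 : ((((a ::ₘ s).sum : M)) : Fin 3 → ℕ) 1
        = (a : Fin 3 → ℕ) 1 + ((s.sum : M) : Fin 3 → ℕ) 1 := by
      rw [Multiset.sum_cons]; rfl
    have e2 : ((((a ::ₘ s).sum : M)) : Fin 3 → ℕ) 2
        = (a : Fin 3 → ℕ) 2 + ((s.sum : M) : Fin 3 → ℕ) 2 := by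
      rw [Multiset.sum_cons]; rfl
    rw [e0, e1, e2, Multiset.card_cons]
    rcases ha with rfl | rfl | rfl
    · rw [Multiset.count_cons_self, Multiset.count_cons_of_ne (show B ≠ A by decide),
        Multiset.count_cons_of_ne (show C ≠ A by decide)]
      have hA : (A : Fin 3 → ℕ) 0 = 3 ∧ (A : Fin 3 → ℕ) 1 = 0 ∧ (A : Fin 3 → ℕ) 2 = 1 :=
        ⟨rfl, rfl, rfl⟩
      omega
    · rw [Multiset.count_cons_self, Multiset.count_cons_of_ne (show A ≠ B by decide),
        Multiset.count_cons_of_ne (show C ≠ B by decide)]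
      have hB : (B : Fin 3 → ℕ) 0 = 0 ∧ (B : Fin 3 → ℕ) 1 = 3 ∧ (B : Fin 3 → ℕ) 2 = 2 :=
        ⟨rfl, rfl, rfl⟩
      omega
    · rw [Multiset.count_cons_self, Multiset.count_cons_of_ne (show A ≠ C by decide),
        Multiset.count_cons_of_ne (show B ≠ C by decide)]
      have hC : (C : Fin 3 → ℕ) 0 = 1 ∧ (C : Fin 3 → ℕ) 1 = 1 ∧ (C : Fin 3 → ℕ) 2 = 1 :=
        ⟨rfl, rfl, rfl⟩
      omega

/-- The Diophantine monoid `{x ∈ ℕ₀³ : x₁ + 2x₂ = 3x₃}` is length-factorial but not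
factorial. -/
theorem M_lengthFactorial_not_factorial :
    IsAddLengthFactorial M ∧ ¬IsAddFactorial M := by

  constructor
  · intro s t hs ht hsum hcard
    have hs' : ∀ a ∈ s, a = A ∨ a = B ∨ a = C := fun a h => atom_eq (hs a h)
    have ht' : ∀ a ∈ t, a = A ∨ a = B ∨ a = C := fun a h => atom_eq (ht a h)
    obtain ⟨s0, s1, s2, sc⟩ := sum_counts s hs'
    obtain ⟨t0, t1, t2, tc⟩ := sum_counts t ht'
    have q0 := congrFun (congrArg Subtype.val hsum) 0
    have q1 := congrFun (congrArg Subtype.val hsum) 1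
    have q2 := congrFun (congrArg Subtype.val hsum) 2
    have hcA : s.count A = t.count A := by omega
    have hcB : s.count B = t.count B := by omega
    have hcC : s.count C = t.count C := by omega
    refine Multiset.ext.mpr fun a => ?_
    by_cases haA : a = A
    · subst haA; exact hcA
    by_cases haB : a = B
    · subst haB; exact hcB
    by_cases haC : a = C
    · subst haC; exact hcC
    rw [Multiset.count_eq_zero_of_notMem, Multiset.count_eq_zero_of_notMem]
    · intro hm; rcases ht' a hm with h | h | h <;> tauto
    · intro hm; rcases hs' a hm with h | h | h <;> tauto
  · rintro ⟨-, hfac⟩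
    have hsum : ({A, B} : Multiset M).sum = ({C, C, C} : Multiset M).sum := by
      show A + (B + 0) = C + (C + (C + 0))
      refine eqM ?_ ?_ ?_ <;> rfl
    have h := hfac {A, B} {C, C, C}
      (by
        intro a hm
        simp only [Multiset.insert_eq_cons, Multiset.mem_cons, Multiset.mem_singleton] at hm
        exact atom_ABC (by tauto))
      (by
        intro a hm
        simp only [Multiset.insert_eq_cons, Multiset.mem_cons, Multiset.mem_singleton] at hm
        exact atom_ABC (by tauto))
      hsum
    have := congrArg Multiset.card h
    simp at this
end
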